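/- Let Ω be a finite set with |Ω| = 9 and let G be a solvable subgroup of the symmetric group on Ω acting primitively on Ω. Then there exists a 3-element subset Δ of Ω whose pointwise stabilizer in G is trivial. -/

import Mathlib

/-!
A nontrivial solvable group has a nontrivial abelian normal subgroup `N`. Primitivity makes `N`
transitive, and a transitive abelian group acts regularly, so `|N| = 9` and `N` is generated by
two elements `a, b`. If `g` fixes `x`, `a • x` and `b • x`, then for `s ∈ {a, b}` the element
`g s g⁻¹ ∈ N` agrees with `s` at `x`, hence equals `s` by regularity. So `g` centralizes `N`
and therefore fixes every point of `N • x = Ω`.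
-/

open Pointwise

/-- A permutation group `(G, Ω)` is primitive if it is transitive and every block is trivial. -/
def IsPrimitivePermGroup (Ω : Type*) [Fintype Ω] (G : Subgroup (Equiv.Perm Ω)) : Prop :=
  MulAction.IsPretransitive G Ω ∧
    ∀ B : Set Ω, MulAction.IsBlock G B → MulAction.IsTrivialBlock B

open MulAction Subgroup

theorem Group.IsSolvable.exists_normal_isMulCommutative_ne_bot (G : Type*) [Group G]
    [Group.IsSolvable G] [Nontrivial G] :
    ∃ N : Subgroup G, N.Normal ∧ IsMulCommutative N ∧ N ≠ ⊥ := by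
  classical
  have hex := IsSolvable.solvable (G := G)
  obtain ⟨m, hm⟩ : ∃ m, Nat.find hex = m + 1 :=
    Nat.exists_eq_succ_of_ne_zero fun h => top_ne_bot (h ▸ Nat.find_spec hex)
  refine ⟨derivedSeries G m, derivedSeries_normal G m, ?_, Nat.find_min hex (by omega)⟩
  rw [← le_centralizer_iff_isMulCommutative, ← commutator_eq_bot_iff_le_centralizer,
    ← derivedSeries_succ, ← hm]
  exact Nat.find_spec hex

theorem exists_closure_pair_eq_top_of_card_eq_sq {G : Type*} [Group G] {p : ℕ} (hp : p.Prime)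
    (hG : Nat.card G = p ^ 2) : ∃ a b : G, closure {a, b} = ⊤ := by
  have : Finite G := Nat.finite_of_card_ne_zero (by rw [hG]; exact pow_ne_zero 2 hp.ne_zero)
  have : Nontrivial G := Finite.one_lt_card_iff_nontrivial.mp (by
    rw [hG]; exact Nat.one_lt_pow two_ne_zero hp.one_lt)
  obtain ⟨a, ha⟩ := exists_ne (1 : G)
  by_cases hcyc : ∀ b, b ∈ zpowers a
  · exact ⟨a, a, by rw [Set.pair_eq_singleton, ← zpowers_eq_closure, eq_top_iff']; exact hcyc⟩
  push Not at hcyc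
  obtain ⟨b, hb⟩ := hcyc
  refine ⟨a, b, ?_⟩
  set H := closure {a, b}
  have haH : zpowers a ≤ H := zpowers_le.mpr (subset_closure (by simp))
  have hbH : b ∈ H := subset_closure (by simp)
  obtain ⟨i, -, hai⟩ := (Nat.dvd_prime_pow hp).mp (hG ▸ card_subgroup_dvd_card (zpowers a))
  obtain ⟨j, hj, hHj⟩ := (Nat.dvd_prime_pow hp).mp (hG ▸ card_subgroup_dvd_card H)
  have hi : i ≠ 0 := by
    rintro rfl
    exact ha (zpowers_eq_bot.mp ((card_eq_one).mp (by simpa using hai)))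
  have hij : i < j := by
    rw [← Nat.pow_lt_pow_iff_right hp.one_lt, ← hai, ← hHj]
    refine (card_le_of_le haH).lt_of_ne fun h => hb ?_
    exact (eq_of_le_of_card_ge haH h.ge) ▸ hbH
  exact eq_top_of_card_eq H (by rw [hHj, hG]; congr 1; omega)

theorem IsPrimitivePermGroup.isPreprimitive {Ω : Type*} [Fintype Ω]
    {G : Subgroup (Equiv.Perm Ω)} (h : IsPrimitivePermGroup Ω G) : IsPreprimitive G Ω :=
  have := h.1
  { isTrivialBlock_of_isBlock := h.2 _ }

namespace MulAction

variable {G X : Type*} [Group G] [MulAction G X] [FaithfulSMul G X]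

theorem IsPreprimitive.isPretransitive_of_normal_of_ne_bot [IsPreprimitive G X]
    {N : Subgroup G} [N.Normal] (hN : N ≠ ⊥) : IsPretransitive N X := by
  refine IsQuasiPreprimitive.isPretransitive_of_normal fun hfix => hN ?_
  refine (eq_bot_iff_forall N).mpr fun n hn => eq_of_smul_eq_smul (α := X) fun x => ?_
  rw [one_smul]
  exact mem_fixedPoints.mp (hfix ▸ Set.mem_univ x) ⟨n, hn⟩

theorem IsPretransitive.eq_one_of_smul_eq_of_isMulCommutative [IsMulCommutative G]
    [IsPretransitive G X] {g : G} {x : X} (hg : g • x = x) : g = 1 := by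
  refine eq_of_smul_eq_smul (α := X) fun y => ?_
  obtain ⟨h, rfl⟩ := exists_smul_eq (M := G) x y
  rw [smul_smul, isMulCommutative_iff.mp ‹_› g h, mul_smul, hg, one_smul]

theorem IsPretransitive.card_eq_of_isMulCommutative [IsMulCommutative G]
    [IsPretransitive G X] (x : X) : Nat.card G = Nat.card X := by
  have : stabilizer G x = ⊥ := (eq_bot_iff_forall _).mpr fun g hg =>
    IsPretransitive.eq_one_of_smul_eq_of_isMulCommutative hg
  rw [← index_stabilizer_of_transitive G x, this, index_bot]

variable {N : Subgroup G} [IsPretransitive N X]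

theorem eq_one_of_smul_eq_of_forall_commute {g : G} {x : X} (hgx : g • x = x)
    (hg : ∀ n ∈ N, Commute g n) : g = 1 := by
  refine eq_of_smul_eq_smul (α := X) fun y => ?_
  obtain ⟨n, rfl⟩ := exists_smul_eq (M := N) x y
  rw [Subgroup.smul_def, ← mul_smul, (hg n n.2).eq, mul_smul, hgx, one_smul]

theorem commute_of_smul_eq_of_smul_smul_eq [N.Normal] [IsMulCommutative N] {g : G} {x : X}
    (hgx : g • x = x) {n : G} (hn : n ∈ N) (hgn : g • n • x = n • x) : Commute g n := by
  have hconj : n⁻¹ * (g * n * g⁻¹) ∈ N := N.mul_mem (N.inv_mem hn) (Normal.conj_mem ‹_› n hn g)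
  have hfix : (n⁻¹ * (g * n * g⁻¹)) • x = x := by
    rw [mul_smul, mul_smul, mul_smul, inv_smul_eq_iff.mpr hgx.symm, hgn, inv_smul_smul]
  have := IsPretransitive.eq_one_of_smul_eq_of_isMulCommutative (G := N) (g := ⟨_, hconj⟩) hfix
  rw [Subgroup.mk_eq_one, inv_mul_eq_one, eq_mul_inv_iff_mul_eq] at this
  exact this.symm

theorem eq_one_of_smul_eq_of_closure_eq_top [N.Normal] [IsMulCommutative N] {S : Set N}
    (hS : closure S = ⊤) {g : G} {x : X} (hgx : g • x = x) (hgS : ∀ s ∈ S, g • s • x = s • x) :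
    g = 1 := by
  refine eq_one_of_smul_eq_of_forall_commute (N := N) hgx fun n hn => ?_
  suffices ∀ m ∈ closure S, Commute g (m : G) from this ⟨n, hn⟩ (hS ▸ mem_top _)
  intro m hm
  induction hm using closure_induction with
  | mem s hs => exact commute_of_smul_eq_of_smul_smul_eq hgx s.2 (hgS s hs)
  | one => exact Commute.one_right g
  | mul s t _ _ hs ht => exact hs.mul_right ht
  | inv s _ hs => exact hs.inv_right

end MulAction

/-- Lemma 2.7 (second part): if `(G, Ω)` is primitive solvable of degree 9, then some
3-element subset of `Ω` has trivial pointwise stabilizer in `G`. -/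
theorem stmt_16 {Ω : Type*} [Fintype Ω] (G : Subgroup (Equiv.Perm Ω))
    (hsolv : IsSolvable G) (hprim : IsPrimitivePermGroup Ω G)
    (hcard : Fintype.card Ω = 9) :
    ∃ Δ : Set Ω, Δ.ncard = 3 ∧
      ∀ g : G, (∀ x ∈ Δ, (g : Equiv.Perm Ω) x = x) → g = 1 := by
  have : Group.IsSolvable G := hsolv
  have := hprim.isPreprimitive
  have : Nontrivial Ω := Fintype.one_lt_card_iff_nontrivial.mp (by omega)
  obtain ⟨x, y, hxy⟩ := exists_pair_ne Ω
  have : Nontrivial G := by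
    obtain ⟨g, rfl⟩ := exists_smul_eq G x y
    exact nontrivial_of_ne g 1 (by rintro rfl; exact hxy (one_smul G x).symm)
  obtain ⟨N, hNn, hNc, hN⟩ := Group.IsSolvable.exists_normal_isMulCommutative_ne_bot G
  have := IsPreprimitive.isPretransitive_of_normal_of_ne_bot (X := Ω) hN
  obtain ⟨a, b, hab⟩ := exists_closure_pair_eq_top_of_card_eq_sq Nat.prime_three <| by
    rw [IsPretransitive.card_eq_of_isMulCommutative (G := N) x, Nat.card_eq_fintype_card, hcard]
    rfl
  have hbase : ({x, a • x, b • x} : Set Ω).ncard ≤ 3 :=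
    (Set.ncard_insert_le _ _).trans (by grw [Set.ncard_insert_le, Set.ncard_singleton])
  obtain ⟨Δ, hsub, -, hΔ⟩ := Set.exists_subsuperset_card_eq (n := 3) (Set.subset_univ _) hbase
    (by rw [Set.ncard_univ, Nat.card_eq_fintype_card, hcard]; norm_num)
  refine ⟨Δ, hΔ, fun g hg => eq_one_of_smul_eq_of_closure_eq_top hab (hg x (hsub (by simp))) ?_⟩
  rintro s (rfl | rfl) <;> exact hg _ (hsub (by simp))
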